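/- arXiv:2506.20260 — 5 statements merged into one kernel-verified Lean document; each statement's English description precedes it below -/
import Mathlib

section
/- D-preferred argumentative ensembling satisfies model agreement: if two models M_i, M_j belong to the same d-preferred extension of the corresponding BAF, then M_i(x) = M_j(x). -/
/-- Set-attack in a bipolar argumentation framework: direct, indirect
(attack followed by a nonempty chain of supports), or supported
(nonempty chain of supports followed by an attack). -/
def SetAttacks {α : Type*} (att sup : α → α → Prop) (T : Set α) (a : α) : Prop :=
  ∃ b ∈ T, att b a ∨ (∃ c, att b c ∧ Relation.TransGen sup c a) ∨
    (∃ c, Relation.TransGen sup b c ∧ att c a)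

def SetSupports {α : Type*} (sup : α → α → Prop) (T : Set α) (a : α) : Prop :=
  ∃ b ∈ T, sup b a

def ConflictFree {α : Type*} (att sup : α → α → Prop) (T : Set α) : Prop :=
  ∀ a ∈ T, ¬ SetAttacks att sup T a

def Safe {α : Type*} (att sup : α → α → Prop) (T : Set α) : Prop :=
  ¬ ∃ a, SetAttacks att sup T a ∧ (SetSupports sup T a ∨ a ∈ T)

def Defends {α : Type*} (att sup : α → α → Prop) (T : Set α) (a : α) : Prop :=
  ∀ b, SetAttacks att sup {b} a → ∃ c ∈ T, SetAttacks att sup {c} b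

def DAdmissible {α : Type*} (att sup : α → α → Prop) (T : Set α) : Prop :=
  ConflictFree att sup T ∧ ∀ a ∈ T, Defends att sup T a

def SAdmissible {α : Type*} (att sup : α → α → Prop) (T : Set α) : Prop :=
  Safe att sup T ∧ ∀ a ∈ T, Defends att sup T a

def CAdmissible {α : Type*} (att sup : α → α → Prop) (T : Set α) : Prop :=
  ConflictFree att sup T ∧ (∀ a ∈ T, ∀ b, sup a b → b ∈ T) ∧ ∀ a ∈ T, Defends att sup T a

def DPreferred {α : Type*} (att sup : α → α → Prop) (T : Set α) : Prop :=
  DAdmissible att sup T ∧ ∀ U, DAdmissible att sup U → T ⊆ U → U = T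

def SPreferred {α : Type*} (att sup : α → α → Prop) (T : Set α) : Prop :=
  SAdmissible att sup T ∧ ∀ U, SAdmissible att sup U → T ⊆ U → U = T

def CPreferred {α : Type*} (att sup : α → α → Prop) (T : Set α) : Prop :=
  CAdmissible att sup T ∧ ∀ U, CAdmissible att sup U → T ⊆ U → U = T

def Stable {α : Type*} (att sup : α → α → Prop) (T : Set α) : Prop :=
  ConflictFree att sup T ∧ ∀ a, a ∉ T → SetAttacks att sup T a

/-- Attack relation of the BAF corresponding to an MM instance.
Sum.inl i is the argument for model M_i, Sum.inr i the one for CE c_i.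
ge i j means M_i ⪰ M_j. -/
def mmAtt {X ι : Type*} (Mod : ι → X → Bool) (c : ι → X) (x : X)
    (ge : ι → ι → Prop) : ι ⊕ ι → ι ⊕ ι → Prop
  | Sum.inl i, Sum.inl j => Mod i x ≠ Mod j x ∧ ge i j
  | Sum.inl i, Sum.inr j => Mod i (c j) = Mod i x ∧ ge i j
  | Sum.inr j, Sum.inl i => Mod i (c j) = Mod i x ∧ ge j i
  | Sum.inr _, Sum.inr _ => False

/-- Support relation of the MM-BAF: mutual supports between M_i and c_i. -/
def mmSup {ι : Type*} : ι ⊕ ι → ι ⊕ ι → Prop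
  | Sum.inl i, Sum.inr j => i = j
  | Sum.inr i, Sum.inl j => i = j
  | _, _ => False

theorem ConflictFree.not_att {α : Type*} {att sup : α → α → Prop} {T : Set α}
    (hT : ConflictFree att sup T) {a b : α} (ha : a ∈ T) (hb : b ∈ T) : ¬ att a b :=
  fun h => hT b hb ⟨a, ha, Or.inl h⟩

theorem mmAtt_inl_or_inl_of_ne {X ι : Type*} {Mod : ι → X → Bool} {c : ι → X} {x : X}
    {ge : ι → ι → Prop} (htot : ∀ i j, ge i j ∨ ge j i) {i j : ι} (hne : Mod i x ≠ Mod j x) :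
    mmAtt Mod c x ge (Sum.inl i) (Sum.inl j) ∨ mmAtt Mod c x ge (Sum.inl j) (Sum.inl i) :=
  (htot i j).imp (fun hij => ⟨hne, hij⟩) (fun hji => ⟨hne.symm, hji⟩)

theorem dPreferred_model_agreement_general {X ι : Type*} (Mod : ι → X → Bool) (c : ι → X)
    (x : X) (ge : ι → ι → Prop)
    (htot : ∀ i j, ge i j ∨ ge j i)
    (T : Set (ι ⊕ ι)) (hT : DPreferred (mmAtt Mod c x ge) mmSup T) :
    ∀ i j : ι, Sum.inl i ∈ T → Sum.inl j ∈ T → Mod i x = Mod j x := by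
  intro i j hi hj
  by_contra hne
  have hcf : ConflictFree (mmAtt Mod c x ge) mmSup T := hT.1.1
  rcases mmAtt_inl_or_inl_of_ne htot hne with hij | hji
  · exact hcf.not_att hi hj hij
  · exact hcf.not_att hj hi hji

/-- D-preferred argumentative ensembling satisfies model agreement: two models
in the same d-preferred extension of the MM-BAF assign the same label to x. -/
theorem dPreferred_model_agreement {X ι : Type*} (Mod : ι → X → Bool) (c : ι → X)
    (x : X) (ge : ι → ι → Prop)
    (hval : ∀ i, Mod i (c i) ≠ Mod i x)
    (hrefl : ∀ i, ge i i) (htrans : ∀ i j k, ge i j → ge j k → ge i k)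
    (htot : ∀ i j, ge i j ∨ ge j i)
    (T : Set (ι ⊕ ι)) (hT : DPreferred (mmAtt Mod c x ge) mmSup T) :
    ∀ i j : ι, Sum.inl i ∈ T → Sum.inl j ∈ T → Mod i x = Mod j x :=
  dPreferred_model_agreement_general Mod c x ge htot T hT
end

section
/- S-preferred extensions of the MM-BAF satisfy counterfactual coherence: for any s-preferred extension P, and any index i, M_i ∈ P if and only if c_i ∈ P. -/
/-!
With mutual supports `a ⇄ σ a` for an involution `σ`, a chain of supports from `a` ends at `a` or
`σ a`, so `T` attacks `a` iff some `b ∈ T` directly attacks `a` or `σ a`, or `σ b` directly attacks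
`a`. Consequently closing `T` under `σ` only yields attacks on `a` or `σ a` that `T` already makes,
so safety survives; and an attacker of `a` becomes (up to taking its mate) an attacker of `σ a`,
whose counterattack from `T` transfers back the same way, so defence survives. Maximality then
forces every s-preferred extension to be closed under `σ`, which in the MM-BAF swaps `M_i` and `c_i`.
-/

section InvolutiveSupport

variable {α : Type*} {att sup : α → α → Prop} {σ : α → α}

theorem transGen_iff_of_involutive (hσ : Function.Involutive σ)
    (hsup : ∀ a b, sup a b ↔ σ a = b) {a b : α} :
    Relation.TransGen sup a b ↔ σ a = b ∨ b = a := by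
  constructor
  · intro h
    induction h with
    | single h => exact Or.inl ((hsup _ _).1 h)
    | tail _ h ih =>
      rcases ih with rfl | rfl
      · exact Or.inr (((hsup _ _).1 h).symm.trans (hσ a))
      · exact Or.inl ((hsup _ _).1 h)
  · rintro (rfl | rfl)
    · exact .single ((hsup _ _).2 rfl)
    · exact .tail (.single ((hsup _ _).2 rfl)) ((hsup _ _).2 (hσ b))

theorem setAttacks_iff_of_involutive (hσ : Function.Involutive σ)
    (hsup : ∀ a b, sup a b ↔ σ a = b) {T : Set α} {a : α} :
    SetAttacks att sup T a ↔ ∃ b ∈ T, att b a ∨ att b (σ a) ∨ att (σ b) a := by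
  simp only [SetAttacks, transGen_iff_of_involutive hσ hsup]
  refine exists_congr fun b => and_congr_right fun _ => ?_
  constructor
  · rintro (h | ⟨c, hbc, rfl | rfl⟩ | ⟨c, rfl | rfl, hca⟩)
    · exact Or.inl h
    · exact Or.inr (Or.inl (by rwa [hσ]))
    · exact Or.inl hbc
    · exact Or.inr (Or.inr hca)
    · exact Or.inl hca
  · rintro (h | h | h)
    · exact Or.inl h
    · exact Or.inr (Or.inl ⟨σ a, h, Or.inl (hσ a)⟩)
    · exact Or.inr (Or.inr ⟨σ b, Or.inl rfl, h⟩)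

theorem setSupports_iff_of_involutive (hσ : Function.Involutive σ)
    (hsup : ∀ a b, sup a b ↔ σ a = b) {T : Set α} {a : α} :
    SetSupports sup T a ↔ σ a ∈ T := by
  simp only [SetSupports, hsup]
  constructor
  · rintro ⟨b, hb, rfl⟩
    rwa [hσ]
  · exact fun h => ⟨σ a, h, hσ a⟩

theorem safe_iff_of_involutive (hσ : Function.Involutive σ)
    (hsup : ∀ a b, sup a b ↔ σ a = b) {T : Set α} :
    Safe att sup T ↔ ∀ a, SetAttacks att sup T a → a ∉ T ∪ σ ⁻¹' T := by
  simp only [Safe, setSupports_iff_of_involutive hσ hsup, Set.mem_union, Set.mem_preimage]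
  grind

theorem setAttacks_of_setAttacks_union_preimage (hσ : Function.Involutive σ)
    (hsup : ∀ a b, sup a b ↔ σ a = b) {T : Set α} {a : α}
    (h : SetAttacks att sup (T ∪ σ ⁻¹' T) a) :
    SetAttacks att sup T a ∨ SetAttacks att sup T (σ a) := by
  simp only [setAttacks_iff_of_involutive hσ hsup] at h ⊢
  obtain ⟨b, hb | hb, hba⟩ := h
  · exact Or.inl ⟨b, hb, hba⟩
  · rcases hba with hba | hba | hba
    · exact Or.inl ⟨σ b, hb, Or.inr (Or.inr (by rwa [hσ]))⟩
    · exact Or.inr ⟨σ b, hb, Or.inr (Or.inr (by rwa [hσ]))⟩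
    · exact Or.inl ⟨σ b, hb, Or.inl hba⟩

theorem setAttacks_singleton_mate (hσ : Function.Involutive σ)
    (hsup : ∀ a b, sup a b ↔ σ a = b) {a b : α} (h : SetAttacks att sup {b} a) :
    SetAttacks att sup {b} (σ a) ∨ SetAttacks att sup {σ b} (σ a) := by
  simp only [setAttacks_iff_of_involutive hσ hsup, Set.mem_singleton_iff, exists_eq_left, hσ a]
    at h ⊢
  tauto

theorem Defends.mono {T U : Set α} {a : α} (hTU : T ⊆ U) (h : Defends att sup T a) :
    Defends att sup U a :=
  fun b hb => (h b hb).imp fun _ => And.imp_left (@hTU _)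

theorem Defends.union_preimage_of_mate (hσ : Function.Involutive σ)
    (hsup : ∀ a b, sup a b ↔ σ a = b) {T : Set α} {a : α} (h : Defends att sup T (σ a)) :
    Defends att sup (T ∪ σ ⁻¹' T) a := by
  intro b hb
  rcases setAttacks_singleton_mate hσ hsup hb with hb | hb
  · obtain ⟨c, hc, hcb⟩ := h b hb
    exact ⟨c, Or.inl hc, hcb⟩
  · obtain ⟨c, hc, hcb⟩ := h (σ b) hb
    rcases setAttacks_singleton_mate hσ hsup hcb with hcb | hcb <;> rw [hσ b] at hcb
    · exact ⟨c, Or.inl hc, hcb⟩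
    · exact ⟨σ c, Or.inr (by rwa [Set.mem_preimage, hσ]), hcb⟩

theorem SAdmissible.union_preimage (hσ : Function.Involutive σ)
    (hsup : ∀ a b, sup a b ↔ σ a = b) {T : Set α} (hT : SAdmissible att sup T) :
    SAdmissible att sup (T ∪ σ ⁻¹' T) := by
  obtain ⟨hsafe, hdef⟩ := hT
  rw [safe_iff_of_involutive hσ hsup] at hsafe
  refine ⟨(safe_iff_of_involutive hσ hsup).2 fun a ha hmem => ?_, ?_⟩
  · have hmates : a ∈ T ∪ σ ⁻¹' T ∧ σ a ∈ T ∪ σ ⁻¹' T := by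
      simp only [Set.mem_union, Set.mem_preimage, hσ a] at hmem ⊢
      tauto
    rcases setAttacks_of_setAttacks_union_preimage hσ hsup ha with h | h
    · exact hsafe a h hmates.1
    · exact hsafe (σ a) h hmates.2
  · rintro a (ha | ha)
    · exact (hdef a ha).mono Set.subset_union_left
    · exact (hdef (σ a) ha).union_preimage_of_mate hσ hsup

theorem SPreferred.mate_mem_iff (hσ : Function.Involutive σ)
    (hsup : ∀ a b, sup a b ↔ σ a = b) {T : Set α} (hT : SPreferred att sup T) (a : α) :
    σ a ∈ T ↔ a ∈ T := by
  have hclosed : T ∪ σ ⁻¹' T = T :=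
    hT.2 _ (hT.1.union_preimage hσ hsup) Set.subset_union_left
  exact ⟨fun h => hclosed ▸ Or.inr h,
    fun h => hclosed ▸ Or.inr (by rwa [Set.mem_preimage, hσ a])⟩

end InvolutiveSupport

theorem mmSup_iff {ι : Type*} (a b : ι ⊕ ι) : mmSup a b ↔ a.swap = b := by
  cases a <;> cases b <;> simp [mmSup, eq_comm]

theorem sPreferred_counterfactual_coherence_general {X ι : Type*} (Mod : ι → X → Bool)
    (c : ι → X) (x : X) (ge : ι → ι → Prop)
    (P : Set (ι ⊕ ι)) (hP : SPreferred (mmAtt Mod c x ge) mmSup P) :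
    ∀ i : ι, Sum.inl i ∈ P ↔ Sum.inr i ∈ P :=
  fun i => (hP.mate_mem_iff Sum.swap_swap mmSup_iff (Sum.inl i)).symm

/-- S-preferred extensions of the MM-BAF satisfy counterfactual coherence:
a model M_i is in the extension iff its counterfactual c_i is. -/
theorem sPreferred_counterfactual_coherence {X ι : Type*} (Mod : ι → X → Bool)
    (c : ι → X) (x : X) (ge : ι → ι → Prop)
    (hval : ∀ i, Mod i (c i) ≠ Mod i x)
    (hrefl : ∀ i, ge i i) (htrans : ∀ i j k, ge i j → ge j k → ge i k)
    (htot : ∀ i j, ge i j ∨ ge j i)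
    (P : Set (ι ⊕ ι)) (hP : SPreferred (mmAtt Mod c x ge) mmSup P) :
    ∀ i : ι, Sum.inl i ∈ P ↔ Sum.inr i ∈ P :=
  sPreferred_counterfactual_coherence_general Mod c x ge P hP
end

section
/- If in the MM-BAF there exists a model M_i strictly preferred to all other models, then M_i belongs to every s-preferred extension. -/
/-
Neither `M_i` nor `c_i` can be attacked: a direct attack on either would need some `M_j ⪰ M_i`
with `j ≠ i` or would contradict `M_i(c_i) ≠ M_i(x)`, and supports never leave `{M_i, c_i}`.
Adding `M_i` to an s-admissible set `P` therefore keeps it s-admissible: `M_i` needs no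
defence, and if `M_i` attacked (possibly through `c_i`) a member of `P` or an argument
supported by `P`, then, supports being symmetric, some member of `P` would be attacked by
`M_i` or `c_i`, and `P` could not defend it. Maximality puts `M_i` into every s-preferred `P`.
-/

section BipolarFramework

variable {α : Type*} {att sup : α → α → Prop} {S : Set α}

lemma mem_of_transGen (hS : ∀ z w, sup z w → z ∈ S → w ∈ S) {a b : α}
    (hab : Relation.TransGen sup a b) (ha : a ∈ S) : b ∈ S := by
  induction hab with
  | single h => exact hS _ _ h ha
  | tail _ h ih => exact hS _ _ h ih

lemma not_setAttacks_of_forall_not_att [Std.Symm sup]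
    (hS : ∀ z w, sup z w → z ∈ S → w ∈ S) (hatt : ∀ b, ∀ z ∈ S, ¬ att b z)
    (T : Set α) {z : α} (hz : z ∈ S) : ¬ SetAttacks att sup T z := by
  rintro ⟨b, -, h | ⟨c, hbc, hcz⟩ | ⟨c, -, hcz⟩⟩
  · exact hatt b z hz h
  · exact hatt b c (mem_of_transGen hS (Std.Symm.symm _ _ hcz) hz) hbc
  · exact hatt c z hz hcz

lemma exists_mem_setAttacks_singleton_of_supports (hS : ∀ z w, sup z w → z ∈ S → w ∈ S)
    {a y p : α} (ha : a ∈ S) (hay : SetAttacks att sup {a} y) (hyp : sup y p) :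
    ∃ z ∈ S, SetAttacks att sup {z} p := by
  obtain ⟨b, rfl, h | ⟨c, hbc, hcy⟩ | ⟨c, hbc, hcy⟩⟩ := hay
  · exact ⟨b, ha, b, rfl, Or.inr (Or.inl ⟨y, h, .single hyp⟩)⟩
  · exact ⟨b, ha, b, rfl, Or.inr (Or.inl ⟨c, hbc, hcy.tail hyp⟩)⟩
  · exact ⟨c, mem_of_transGen hS hbc ha, c, rfl, Or.inr (Or.inl ⟨y, hcy, .single hyp⟩)⟩

theorem SAdmissible.insert_of_forall_not_att [Std.Symm sup]
    (hS : ∀ z w, sup z w → z ∈ S → w ∈ S) (hatt : ∀ b, ∀ z ∈ S, ¬ att b z)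
    {a : α} (ha : a ∈ S) {P : Set α} (hP : SAdmissible att sup P) :
    SAdmissible att sup (insert a P) := by
  have unattacked := not_setAttacks_of_forall_not_att hS hatt
  obtain ⟨hsafe, hdef⟩ := hP
  refine ⟨?_, ?_⟩
  · rintro ⟨y, ⟨b, hb, hby⟩, hy⟩
    have hyP : y ∈ P ∨ SetSupports sup P y := by
      rcases hy with ⟨p, rfl | hp, hpy⟩ | rfl | hy
      · exact (unattacked _ (hS _ _ hpy ha) ⟨b, hb, hby⟩).elim
      · exact Or.inr ⟨p, hp, hpy⟩
      · exact (unattacked _ ha ⟨b, hb, hby⟩).elim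
      · exact Or.inl hy
    rcases hb with rfl | hb
    · obtain ⟨q, hq, z, hz, hzq⟩ : ∃ q ∈ P, ∃ z ∈ S, SetAttacks att sup {z} q := by
        rcases hyP with hy | ⟨p, hp, hpy⟩
        · exact ⟨y, hy, b, ha, b, rfl, hby⟩
        · exact ⟨p, hp, exists_mem_setAttacks_singleton_of_supports hS ha
            ⟨b, rfl, hby⟩ (Std.Symm.symm _ _ hpy)⟩
      obtain ⟨e, -, hez⟩ := hdef q hq z hzq
      exact unattacked _ hz hez
    · exact hsafe ⟨y, ⟨b, hb, hby⟩, hyP.symm⟩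
  · rintro b (rfl | hb) z hzb
    · exact (unattacked _ ha hzb).elim
    · obtain ⟨e, he, hez⟩ := hdef b hb z hzb
      exact ⟨e, Set.mem_insert_of_mem _ he, hez⟩

theorem SPreferred.mem_of_forall_not_att [Std.Symm sup]
    (hS : ∀ z w, sup z w → z ∈ S → w ∈ S) (hatt : ∀ b, ∀ z ∈ S, ¬ att b z)
    {a : α} (ha : a ∈ S) {P : Set α} (hP : SPreferred att sup P) : a ∈ P := by
  rw [← hP.2 _ (SAdmissible.insert_of_forall_not_att hS hatt ha hP.1) (Set.subset_insert a P)]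
  exact Set.mem_insert a P

end BipolarFramework

instance {ι : Type*} : Std.Symm (mmSup (ι := ι)) where
  symm := by rintro (a | a) (b | b) h <;> simp_all [mmSup]

lemma mem_pair_of_mmSup {ι : Type*} (i : ι) (z w : ι ⊕ ι) (h : mmSup z w)
    (hz : z ∈ ({.inl i, .inr i} : Set (ι ⊕ ι))) :
    w ∈ ({.inl i, .inr i} : Set (ι ⊕ ι)) := by
  rcases z with a | a <;> rcases w with b | b <;> simp_all [mmSup]

lemma not_mmAtt_of_dominant {X ι : Type*} {Mod : ι → X → Bool} {c : ι → X} {x : X}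
    {ge : ι → ι → Prop} {i : ι} (hval : ∀ k, Mod k (c k) ≠ Mod k x)
    (hdom : ∀ j, j ≠ i → ge i j ∧ ¬ ge j i) (b : ι ⊕ ι) :
    ∀ z ∈ ({.inl i, .inr i} : Set (ι ⊕ ι)), ¬ mmAtt Mod c x ge b z := by
  rintro z (rfl | rfl) <;> rcases b with j | j <;> rintro ⟨hMod, hge⟩ <;>
    obtain rfl | hj := eq_or_ne j i
  exacts [hMod rfl, (hdom j hj).2 hge, hval j hMod, (hdom j hj).2 hge,
    hval j hMod, (hdom j hj).2 hge]

theorem dominant_model_in_every_sPreferred_general {X ι : Type*} (Mod : ι → X → Bool)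
    (c : ι → X) (x : X) (ge : ι → ι → Prop)
    (hval : ∀ k, Mod k (c k) ≠ Mod k x)
    (i : ι) (hdom : ∀ j, j ≠ i → ge i j ∧ ¬ ge j i) :
    ∀ P : Set (ι ⊕ ι), SPreferred (mmAtt Mod c x ge) mmSup P → Sum.inl i ∈ P :=
  fun _ hP => SPreferred.mem_of_forall_not_att (mem_pair_of_mmSup i)
    (not_mmAtt_of_dominant hval hdom) (Or.inl rfl) hP

/-- If a model M_i is strictly preferred to all other models, then M_i
belongs to every s-preferred extension of the MM-BAF. -/
theorem dominant_model_in_every_sPreferred {X ι : Type*} (Mod : ι → X → Bool)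
    (c : ι → X) (x : X) (ge : ι → ι → Prop)
    (hval : ∀ k, Mod k (c k) ≠ Mod k x)
    (hrefl : ∀ k, ge k k) (htrans : ∀ k l m, ge k l → ge l m → ge k m)
    (htot : ∀ k l, ge k l ∨ ge l k)
    (i : ι) (hdom : ∀ j, j ≠ i → ge i j ∧ ¬ ge j i) :
    ∀ P : Set (ι ⊕ ι), SPreferred (mmAtt Mod c x ge) mmSup P → Sum.inl i ∈ P :=
  dominant_model_in_every_sPreferred_general Mod c x ge hval i hdom
end

section
/- In any s-preferred extension P of the MM-BAF, there do not exist two counterfactuals c_i, c_j ∈ P whose generating models disagree on x (i.e., with M_i(x) ≠ M_j(x)). -/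
section BipolarArgumentation

variable {α : Type*} {att sup : α → α → Prop} {T : Set α} {a : α}

theorem SetAttacks.of_sup_of_att {b c : α} (hb : b ∈ T) (hbc : sup b c) (hca : att c a) :
    SetAttacks att sup T a :=
  ⟨b, hb, .inr (.inr ⟨c, .single hbc, hca⟩)⟩

theorem Safe.not_setSupports (hT : Safe att sup T) (ha : SetAttacks att sup T a) :
    ¬ SetSupports sup T a :=
  fun hsup => hT ⟨a, ha, .inl hsup⟩

end BipolarArgumentation

/-- `c_i` supports `M_i`, which attacks `M_j`, while `c_j` supports `M_j`. -/
theorem mm_not_safe_of_disagreeing_counterfactuals {X ι : Type*} {Mod : ι → X → Bool}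
    {c : ι → X} {x : X} {ge : ι → ι → Prop} {T : Set (ι ⊕ ι)} {i j : ι}
    (hi : Sum.inr i ∈ T) (hj : Sum.inr j ∈ T) (hne : Mod i x ≠ Mod j x) (hge : ge i j) :
    ¬ Safe (mmAtt Mod c x ge) mmSup T := fun hT =>
  hT.not_setSupports
    (SetAttacks.of_sup_of_att (c := Sum.inl i) hi (show mmSup (Sum.inr i) (Sum.inl i) from rfl)
      (show mmAtt Mod c x ge (Sum.inl i) (Sum.inl j) from ⟨hne, hge⟩))
    ⟨Sum.inr j, hj, show mmSup (Sum.inr j) (Sum.inl j) from rfl⟩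

theorem sPreferred_no_disagreeing_counterfactuals_general {X ι : Type*}
    (Mod : ι → X → Bool) (c : ι → X) (x : X) (ge : ι → ι → Prop)
    (htot : ∀ k l, ge k l ∨ ge l k)
    (P : Set (ι ⊕ ι)) (hP : SPreferred (mmAtt Mod c x ge) mmSup P) :
    ¬ ∃ i j : ι, Sum.inr i ∈ P ∧ Sum.inr j ∈ P ∧ Mod i x ≠ Mod j x := by
  rintro ⟨i, j, hi, hj, hne⟩
  have hsafe : Safe (mmAtt Mod c x ge) mmSup P := hP.1.1
  rcases htot i j with hij | hji
  · exact mm_not_safe_of_disagreeing_counterfactuals hi hj hne hij hsafe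
  · exact mm_not_safe_of_disagreeing_counterfactuals hj hi hne.symm hji hsafe

/-- In any s-preferred extension of the MM-BAF there are no two
counterfactuals whose generating models disagree on x. -/
theorem sPreferred_no_disagreeing_counterfactuals {X ι : Type*}
    (Mod : ι → X → Bool) (c : ι → X) (x : X) (ge : ι → ι → Prop)
    (hval : ∀ k, Mod k (c k) ≠ Mod k x)
    (hrefl : ∀ k, ge k k) (htrans : ∀ k l m, ge k l → ge l m → ge k m)
    (htot : ∀ k l, ge k l ∨ ge l k)
    (P : Set (ι ⊕ ι)) (hP : SPreferred (mmAtt Mod c x ge) mmSup P) :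
    ¬ ∃ i j : ι, Sum.inr i ∈ P ∧ Sum.inr j ∈ P ∧ Mod i x ≠ Mod j x :=
  sPreferred_no_disagreeing_counterfactuals_general Mod c x ge htot P hP
end

section
/- Suppose every counterfactual is valid on its own model (M_i(c_i) ≠ M_i(x) for all i). Define the AAF whose arguments are the pairs (M_i, c_i) with ((M_i,c_i),(M_j,c_j)) an attack iff M_i ⪰ M_j and (M_i(x) ≠ M_j(x) or M_i(c_j) = M_i(x) or M_j(c_i) = M_j(x)). Then the map sending a set of pairs P to f(P) = { M_i, c_i : (M_i,c_i) ∈ P } is a bijection between the preferred extensions of this AAF and the s-preferred extensions of the MM-BAF, with inverse f⁻¹(Q) = { (M_i,c_i) : M_i ∈ Q and c_i ∈ Q }. -/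
def ConflictFreeA {α : Type*} (att : α → α → Prop) (S : Set α) : Prop :=
  ∀ a ∈ S, ∀ b ∈ S, ¬ att a b

def DefendsA {α : Type*} (att : α → α → Prop) (S : Set α) (a : α) : Prop :=
  ∀ b, att b a → ∃ c ∈ S, att c b

def AdmissibleA {α : Type*} (att : α → α → Prop) (S : Set α) : Prop :=
  ConflictFreeA att S ∧ ∀ a ∈ S, DefendsA att S a

def PreferredA {α : Type*} (att : α → α → Prop) (S : Set α) : Prop :=
  AdmissibleA att S ∧ ∀ T, AdmissibleA att T → S ⊆ T → T = S

/-- Attack relation of the AAF on model-counterfactual pairs. -/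
def aafAtt {X ι : Type*} (Mod : ι → X → Bool) (c : ι → X) (x : X)
    (ge : ι → ι → Prop) (i j : ι) : Prop :=
  ge i j ∧ (Mod i x ≠ Mod j x ∨ Mod i (c j) = Mod i x ∨ Mod j (c i) = Mod j x)

/-!
In the MM-BAF every model `M_i` and its counterfactual `c_i` support each other, so the
transitive closure of the support relation relates exactly the arguments with the same index.
Set-attacks, safety and defence therefore only see indices: the MM-BAF is the AAF on pairs
with every argument doubled, the pair AAF attacking `i → j` exactly when some argument of
index `i` attacks some argument of index `j`. The s-admissible sets that are unions of pairs are
the preimages of admissible sets of pairs, and the set of pairs touched by any s-admissible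
set is admissible, so maximal ones on either side correspond.
-/

def pairIndex {ι : Type*} : ι ⊕ ι → ι := Sum.elim id id

section PairedBAF

open Relation

variable {ι : Type*}

@[simp] lemma pairIndex_inl (i : ι) : pairIndex (Sum.inl i : ι ⊕ ι) = i := rfl

@[simp] lemma pairIndex_inr (i : ι) : pairIndex (Sum.inr i : ι ⊕ ι) = i := rfl

lemma pairIndex_surjective : Function.Surjective (pairIndex (ι := ι)) :=
  fun i => ⟨Sum.inl i, rfl⟩

lemma preimage_pairIndex (P : Set ι) :
    pairIndex ⁻¹' P = (Sum.inl '' P ∪ Sum.inr '' P : Set (ι ⊕ ι)) := by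
  ext (i | i) <;> simp

lemma pairIndex_eq_of_mmSup {a b : ι ⊕ ι} (h : mmSup a b) : pairIndex a = pairIndex b := by
  cases a <;> cases b <;> simp_all [mmSup]

lemma eq_or_mmSup_of_pairIndex_eq {a b : ι ⊕ ι} (h : pairIndex a = pairIndex b) :
    a = b ∨ mmSup a b := by
  cases a <;> cases b <;> simp_all [mmSup]

lemma transGen_mmSup_iff {a b : ι ⊕ ι} :
    TransGen (mmSup (ι := ι)) a b ↔ pairIndex a = pairIndex b := by
  refine ⟨fun h => ?_, fun h => ?_⟩
  · induction h with
    | single h => exact pairIndex_eq_of_mmSup h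
    | tail _ h ih => exact ih.trans (pairIndex_eq_of_mmSup h)
  · have loop : ∀ a : ι ⊕ ι, TransGen mmSup a a
      | .inl i => .head (show mmSup _ (.inr i) from rfl) (.single rfl)
      | .inr i => .head (show mmSup _ (.inl i) from rfl) (.single rfl)
    rcases eq_or_mmSup_of_pairIndex_eq h with rfl | hs
    exacts [loop a, .single hs]

variable {att : ι ⊕ ι → ι ⊕ ι → Prop}

lemma setAttacks_mmSup_singleton_of_att {a b c : ι ⊕ ι} (h : att b c)
    (hc : pairIndex c = pairIndex a) : SetAttacks att mmSup {b} a :=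
  ⟨b, rfl, .inr (.inl ⟨c, h, transGen_mmSup_iff.mpr hc⟩)⟩

lemma exists_map_of_setAttacks_mmSup {T : Set (ι ⊕ ι)} {a : ι ⊕ ι}
    (h : SetAttacks att mmSup T a) :
    ∃ b ∈ T, Relation.Map att pairIndex pairIndex (pairIndex b) (pairIndex a) := by
  obtain ⟨b, hb, h | ⟨c, hbc, hca⟩ | ⟨c, hbc, hca⟩⟩ := h
  · exact ⟨b, hb, b, a, h, rfl, rfl⟩
  · exact ⟨b, hb, b, c, hbc, rfl, transGen_mmSup_iff.mp hca⟩
  · exact ⟨b, hb, c, a, hca, (transGen_mmSup_iff.mp hbc).symm, rfl⟩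

lemma map_of_setAttacks_mmSup_singleton {a b : ι ⊕ ι} (h : SetAttacks att mmSup {b} a) :
    Relation.Map att pairIndex pairIndex (pairIndex b) (pairIndex a) := by
  obtain ⟨_, rfl, hba⟩ := exists_map_of_setAttacks_mmSup h
  exact hba

lemma sAdmissible_preimage_pairIndex_iff (P : Set ι) :
    SAdmissible att mmSup (pairIndex ⁻¹' P) ↔
      AdmissibleA (Relation.Map att pairIndex pairIndex) P := by
  constructor
  · rintro ⟨hsafe, hdef⟩
    refine ⟨?_, ?_⟩
    · rintro _ hb _ ha ⟨b, a, hba, rfl, rfl⟩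
      exact hsafe ⟨a, ⟨b, hb, .inl hba⟩, .inr ha⟩
    · rintro _ ha _ ⟨b, a, hba, rfl, rfl⟩
      obtain ⟨d, hd, hdb⟩ := hdef a ha b ⟨b, rfl, .inl hba⟩
      exact ⟨pairIndex d, hd, map_of_setAttacks_mmSup_singleton hdb⟩
  · rintro ⟨hcf, hdef⟩
    refine ⟨?_, fun a ha b hba => ?_⟩
    · rintro ⟨a, hTa, ha⟩
      obtain ⟨b, hb, hba⟩ := exists_map_of_setAttacks_mmSup hTa
      have haP : pairIndex a ∈ P := by
        rcases ha with ⟨s, hs, hsa⟩ | ha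
        · rw [← pairIndex_eq_of_mmSup hsa]; exact hs
        · exact ha
      exact hcf _ hb _ haP hba
    · obtain ⟨_, hk, d, e, hde, rfl, he⟩ :=
        hdef _ ha _ (map_of_setAttacks_mmSup_singleton hba)
      exact ⟨d, hk, setAttacks_mmSup_singleton_of_att hde he⟩

lemma admissibleA_image_pairIndex {Q : Set (ι ⊕ ι)} (hQ : SAdmissible att mmSup Q) :
    AdmissibleA (Relation.Map att pairIndex pairIndex) (pairIndex '' Q) := by
  obtain ⟨hsafe, hdef⟩ := hQ
  refine ⟨?_, ?_⟩
  · rintro _ ⟨b, hb, rfl⟩ _ ⟨a, ha, rfl⟩ ⟨b', a', hba', hb', ha'⟩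
    -- `b` reaches `a'` by a supported attack, and `a'` is `a` or is supported by it
    have hQa' : SetAttacks att mmSup Q a' :=
      ⟨b, hb, .inr (.inr ⟨b', transGen_mmSup_iff.mpr hb'.symm, hba'⟩)⟩
    rcases eq_or_mmSup_of_pairIndex_eq ha'.symm with rfl | hs
    exacts [hsafe ⟨a, hQa', .inr ha⟩, hsafe ⟨a', hQa', .inl ⟨a, ha, hs⟩⟩]
  · rintro _ ⟨a, ha, rfl⟩ _ ⟨b, a', hba', rfl, ha'⟩
    obtain ⟨d, hd, hdb⟩ := hdef a ha b (setAttacks_mmSup_singleton_of_att hba' ha')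
    exact ⟨pairIndex d, ⟨d, hd, rfl⟩, map_of_setAttacks_mmSup_singleton hdb⟩

theorem sPreferred_mmSup_iff (Q : Set (ι ⊕ ι)) :
    SPreferred att mmSup Q ↔
      ∃ P, PreferredA (Relation.Map att pairIndex pairIndex) P ∧ Q = pairIndex ⁻¹' P := by
  constructor
  · rintro ⟨hQ, hmax⟩
    have hQ_eq : pairIndex ⁻¹' (pairIndex '' Q) = Q :=
      hmax _ ((sAdmissible_preimage_pairIndex_iff _).mpr (admissibleA_image_pairIndex hQ))
        (Set.subset_preimage_image _ _)
    refine ⟨_, ⟨admissibleA_image_pairIndex hQ, fun P hP hQP => ?_⟩, hQ_eq.symm⟩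
    have hP_eq : pairIndex ⁻¹' P = Q := by
      refine hmax _ ((sAdmissible_preimage_pairIndex_iff _).mpr hP) ?_
      rw [← hQ_eq]
      exact Set.preimage_mono hQP
    rw [← Set.image_preimage_eq P pairIndex_surjective, hP_eq]
  · rintro ⟨P, ⟨hP, hmax⟩, rfl⟩
    refine ⟨(sAdmissible_preimage_pairIndex_iff _).mpr hP, fun U hU hPU => ?_⟩
    have hU_eq : pairIndex '' U = P :=
      hmax _ (admissibleA_image_pairIndex hU) fun i hi => ⟨Sum.inl i, hPU hi, rfl⟩
    exact hPU.antisymm' fun a ha => hU_eq ▸ Set.mem_image_of_mem pairIndex ha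

end PairedBAF

lemma aafAtt_eq_map {X ι : Type*} (Mod : ι → X → Bool) (c : ι → X) (x : X)
    (ge : ι → ι → Prop) :
    aafAtt Mod c x ge = Relation.Map (mmAtt Mod c x ge) pairIndex pairIndex := by
  ext i j
  constructor
  · rintro ⟨hge, h | h | h⟩
    exacts [⟨.inl i, .inl j, ⟨h, hge⟩, rfl, rfl⟩, ⟨.inl i, .inr j, ⟨h, hge⟩, rfl, rfl⟩,
      ⟨.inr i, .inl j, ⟨h, hge⟩, rfl, rfl⟩]
  · rintro ⟨a | a, b | b, h, rfl, rfl⟩ <;> simp_all [mmAtt, aafAtt]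

theorem aaf_baf_equivalence_general {X ι : Type*} (Mod : ι → X → Bool) (c : ι → X)
    (x : X) (ge : ι → ι → Prop) :
    (∀ Q : Set (ι ⊕ ι), SPreferred (mmAtt Mod c x ge) mmSup Q ↔
        ∃ P : Set ι, PreferredA (aafAtt Mod c x ge) P ∧
          Q = Sum.inl '' P ∪ Sum.inr '' P) ∧
    (∀ P : Set ι, PreferredA (aafAtt Mod c x ge) P ↔
        ∃ Q : Set (ι ⊕ ι), SPreferred (mmAtt Mod c x ge) mmSup Q ∧
          P = {i | Sum.inl i ∈ Q ∧ Sum.inr i ∈ Q}) := by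
  have hQ := sPreferred_mmSup_iff (att := mmAtt Mod c x ge)
  simp only [aafAtt_eq_map, ← preimage_pairIndex]
  refine ⟨hQ, fun P => ⟨fun hP => ⟨pairIndex ⁻¹' P, (hQ _).mpr ⟨P, hP, rfl⟩, by ext; simp⟩, ?_⟩⟩
  rintro ⟨Q, hQ', rfl⟩
  obtain ⟨P, hP, rfl⟩ := (hQ Q).mp hQ'
  simpa using hP

/-- The map sending a set P of pairs to f(P) = { M_i, c_i : (M_i, c_i) ∈ P }
is a bijection between preferred extensions of the pair-AAF and s-preferred
extensions of the MM-BAF, with inverse Q ↦ { (M_i, c_i) : M_i ∈ Q, c_i ∈ Q }. -/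
theorem aaf_baf_equivalence {X ι : Type*} (Mod : ι → X → Bool) (c : ι → X)
    (x : X) (ge : ι → ι → Prop)
    (hval : ∀ k, Mod k (c k) ≠ Mod k x)
    (hrefl : ∀ k, ge k k) (htrans : ∀ k l m, ge k l → ge l m → ge k m)
    (htot : ∀ k l, ge k l ∨ ge l k) :
    (∀ Q : Set (ι ⊕ ι), SPreferred (mmAtt Mod c x ge) mmSup Q ↔
        ∃ P : Set ι, PreferredA (aafAtt Mod c x ge) P ∧
          Q = Sum.inl '' P ∪ Sum.inr '' P) ∧
    (∀ P : Set ι, PreferredA (aafAtt Mod c x ge) P ↔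
        ∃ Q : Set (ι ⊕ ι), SPreferred (mmAtt Mod c x ge) mmSup Q ∧
          P = {i | Sum.inl i ∈ Q ∧ Sum.inr i ∈ Q}) :=
  aaf_baf_equivalence_general Mod c x ge
end
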